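/- Fix a construction scheme 𝓕^ω on ω (of some type) with the property that for every finite A ⊆ ω and every a < ω there is F ∈ 𝓕^ω with canonical decomposition (F_i)_{i<n_k} such that A ⊆ F_0 and R(F) = F_0 ∩ a, and let ℙ be the poset defined from 𝓕^ω as in the context. Then for every p ∈ ℙ and every ξ < ω₁ there exist q ∈ ℙ with q ≤ p and x < ω in the domain of Φ^q such that Φ^q(x) = ξ. -/

import Mathlib

noncomputable section
open scoped Classical

/-- The first uncountable ordinal, `ω₁`. -/
def omega1 : Ordinal.{0} := (Cardinal.aleph 1).ord

/-- `ω₁` viewed as a linearly ordered type: the set of countable ordinals. -/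
abbrev Omega1 := {o : Ordinal.{0} // o < omega1}

section Basic

variable {Ω : Type*} [LinearOrder Ω]

/-- `A ⊑ B` : `A` is an initial segment of `B` with respect to the order. -/
def IsInitialSegment (A B : Finset Ω) : Prop :=
  A ⊆ B ∧ ∀ x ∈ B, ∀ y ∈ A, x ≤ y → x ∈ A

/-- The unique order preserving bijection from `E` onto `F` (meaningful when
`|E| = |F|`), extended by the identity off `E`. -/
def opMap (E F : Finset Ω) (x : Ω) : Ω :=
  if h : x ∈ E ∧ F.card = E.card then
    ((F.orderIsoOfFin h.2) ((E.orderIsoOfFin rfl).symm ⟨x, h.1⟩) : Ω)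
  else x

/-- `A` is an interval of `B`: a set of consecutive elements of `B`. -/
def IsIntervalOf (A B : Finset Ω) : Prop :=
  A ⊆ B ∧ ∀ x ∈ A, ∀ z ∈ A, ∀ y ∈ B, x < y → y < z → y ∈ A

end Basic

/-- A type `(m_k, n_k, r_k)_{k<ω}`: `m 0 = 1`, `r k < m (k-1)` and `k < n k` for `k ≥ 1`,
every value is attained by `r` infinitely often, and `m k = n k * (m (k-1) - r k) + r k`. -/
structure SchemeType where
  m : ℕ → ℕ
  n : ℕ → ℕ
  r : ℕ → ℕ
  m_zero : m 0 = 1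
  r_lt_m : ∀ k, 1 ≤ k → r k < m (k - 1)
  k_lt_n : ∀ k, 1 ≤ k → k < n k
  r_infinitely_often : ∀ r' : ℕ, {k : ℕ | 1 ≤ k ∧ r k = r'}.Infinite
  m_rec : ∀ k, 1 ≤ k → m k = n k * (m (k - 1) - r k) + r k

/-- A construction scheme of type `τ` on a linear order `Ω` (in the paper, `Ω = ω₁` or `Ω = ω`):
a family of finite subsets of `Ω` partitioned into levels, with a root `R(F) ⊑ F` of size `r k`
for every `F` in level `k`, which is cofinal in `[Ω]^{<ω}`, whose members at a common level
pairwise intersect in initial segments of both, and such that every `F` at level `k ≥ 1` has a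
unique canonical decomposition `F = ⋃_{i < n k} Fᵢ` into level `k-1` members forming an
increasing Δ-system with root `R(F)`.  The canonical decomposition of `F` is `decomp F`. -/
structure ConstructionScheme (τ : SchemeType) (Ω : Type*) [LinearOrder Ω] where
  level : ℕ → Set (Finset Ω)
  root : Finset Ω → Finset Ω
  decomp : Finset Ω → ℕ → Finset Ω
  cover : ∀ A : Finset Ω, ∃ k, ∃ F ∈ level k, A ⊆ F
  level_eq : ∀ k l F, F ∈ level k → F ∈ level l → k = l
  card_eq : ∀ k, ∀ F ∈ level k, F.card = τ.m k
  root_card : ∀ k, ∀ F ∈ level k, (root F).card = τ.r k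
  root_initSeg : ∀ k, ∀ F ∈ level k, IsInitialSegment (root F) F
  inter_initSeg : ∀ k, ∀ E ∈ level k, ∀ F ∈ level k, IsInitialSegment (E ∩ F) E
  decomp_mem : ∀ k, 1 ≤ k → ∀ F ∈ level k, ∀ i < τ.n k, decomp F i ∈ level (k - 1)
  decomp_union : ∀ k, 1 ≤ k → ∀ F ∈ level k,
    F = (Finset.range (τ.n k)).biUnion (decomp F)
  decomp_root : ∀ k, 1 ≤ k → ∀ F ∈ level k, ∀ i < τ.n k, ∀ j < τ.n k, i ≠ j →
    decomp F i ∩ decomp F j = root F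
  decomp_increasing : ∀ k, 1 ≤ k → ∀ F ∈ level k, ∀ i j, i < j → j < τ.n k →
    ∀ x ∈ decomp F i \ root F, ∀ y ∈ decomp F j \ root F, x < y
  root_lt_decomp : ∀ k, 1 ≤ k → ∀ F ∈ level k, ∀ i < τ.n k,
    ∀ x ∈ root F, ∀ y ∈ decomp F i \ root F, x < y
  decomp_unique : ∀ k, 1 ≤ k → ∀ F ∈ level k, ∀ G : ℕ → Finset Ω,
    (∀ i < τ.n k, G i ∈ level (k - 1)) →
    F = (Finset.range (τ.n k)).biUnion G →
    (∀ i < τ.n k, ∀ j < τ.n k, i ≠ j → G i ∩ G j = root F) →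
    (∀ i j, i < j → j < τ.n k →
      ∀ x ∈ G i \ root F, ∀ y ∈ G j \ root F, x < y) →
    (∀ i < τ.n k, ∀ x ∈ root F, ∀ y ∈ G i \ root F, x < y) →
    ∀ i < τ.n k, G i = decomp F i

namespace ConstructionScheme

variable {τ : SchemeType} {Ω : Type*} [LinearOrder Ω]

/-- The scheme `S` captures the finite Δ-system `t 0, …, t (n-1)` with root `ρ`:
there are `k ≥ 1` and `F ∈ 𝓕_k` with canonical decomposition `(Fᵢ)_{i<n_k}` such that
`ρ ⊆ R(F)`, `t i \ ρ ⊆ Fᵢ \ R(F)` and `φᵢ(t 0) = t i` for all `i < n`. -/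
def CapturesFamily (S : ConstructionScheme τ Ω) (n : ℕ) (t : ℕ → Finset Ω)
    (ρ : Finset Ω) : Prop :=
  ∃ k, 1 ≤ k ∧ n ≤ τ.n k ∧ ∃ F ∈ S.level k,
    ρ ⊆ S.root F ∧
    (∀ i < n, t i \ ρ ⊆ S.decomp F i \ S.root F) ∧
    (∀ i < n, (t 0).image (opMap (S.decomp F 0) (S.decomp F i)) = t i)

/-- The scheme `S` captures the points `ξ 0 < … < ξ (n-1)`: there are `k ≥ 1` and `F ∈ 𝓕_k`
with canonical decomposition `(Fᵢ)_{i<n_k}` such that `ξ i ∈ Fᵢ \ R(F)` and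
`φᵢ(ξ 0) = ξ i` for all `i < n`. -/
def CapturesPoints (S : ConstructionScheme τ Ω) (n : ℕ) (ξ : ℕ → Ω) : Prop :=
  ∃ k, 1 ≤ k ∧ n ≤ τ.n k ∧ ∃ F ∈ S.level k,
    ∀ i < n, ξ i ∈ S.decomp F i \ S.root F ∧
      opMap (S.decomp F 0) (S.decomp F i) (ξ 0) = ξ i

end ConstructionScheme

/-- `(s_ξ)_{ξ<ω₁}` is an (uncountable, increasing) Δ-system with root `ρ`:
`s α ∩ s β = ρ` and `max (s α \ ρ) < min (s β \ ρ)` whenever `α < β`. -/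
def IsDeltaSystem (s : Omega1 → Finset Omega1) (ρ : Finset Omega1) : Prop :=
  ∀ α β : Omega1, α < β → s α ∩ s β = ρ ∧ ∀ x ∈ s α \ ρ, ∀ y ∈ s β \ ρ, x < y

namespace ConstructionScheme

variable {τ : SchemeType}

/-- `S` is an `n`-capturing construction scheme: every uncountable Δ-system
`(s_ξ)_{ξ<ω₁}` with root `ρ` has `n` members `s_{ξ_0}, …, s_{ξ_{n-1}}` (with
`ξ_0 < … < ξ_{n-1}`) captured by `S`. -/
def IsNCapturing (S : ConstructionScheme τ Omega1) (n : ℕ) : Prop :=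
  ∀ (s : Omega1 → Finset Omega1) (ρ : Finset Omega1), IsDeltaSystem s ρ →
    ∃ ξ : ℕ → Omega1, (∀ i j, i < j → j < n → ξ i < ξ j) ∧
      S.CapturesFamily n (fun i => s (ξ i)) ρ

/-- `S` is capturing: `n`-capturing for every `n ≥ 2`. -/
def IsCapturing (S : ConstructionScheme τ Omega1) : Prop :=
  ∀ n, 2 ≤ n → S.IsNCapturing n

/-- The poset `ℙ_n`: finite `P ⊆ ω₁` such that no `ξ_0 < … < ξ_n` in `P` are captured
by the scheme, ordered by reverse inclusion. -/
def PosetP (S : ConstructionScheme τ Omega1) (n : ℕ) : Set (Finset Omega1) :=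
  {P | ∀ ξ : ℕ → Omega1, (∀ i ≤ n, ξ i ∈ P) → (∀ i j, i < j → j ≤ n → ξ i < ξ j) →
    ¬ S.CapturesPoints (n + 1) ξ}

end ConstructionScheme
theorem nat_lt_omega1 (x : ℕ) : (x : Ordinal.{0}) < omega1 := by
  rw [omega1, Cardinal.lt_ord]
  simpa using (Cardinal.nat_lt_aleph0 x).trans_le (Cardinal.aleph0_le_aleph 1)

theorem add_nat_lt_omega1 {δ : Ordinal.{0}} (h : δ < omega1) (i : ℕ) :
    δ + (i : Ordinal.{0}) < omega1 := by
  rw [omega1, Cardinal.lt_ord] at h ⊢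
  rw [Ordinal.card_add]
  exact Cardinal.add_lt_of_lt (Cardinal.aleph0_le_aleph 1) h
    (by simpa using (Cardinal.nat_lt_aleph0 i).trans_le (Cardinal.aleph0_le_aleph 1))

/-- A natural number viewed as a countable ordinal. -/
def natToOmega1 (x : ℕ) : Omega1 := ⟨(x : Ordinal.{0}), nat_lt_omega1 x⟩

/-- The map `φ_{a,δ} : ω → ω₁` given by `φ_{a,δ}(α) = α` for `α < a` and
`φ_{a,δ}(a + i) = δ + i`. -/
def phiMap (a : ℕ) (δ : Omega1) (x : ℕ) : Omega1 :=
  if x < a then natToOmega1 x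
  else ⟨δ.1 + ((x - a : ℕ) : Ordinal.{0}), add_nat_lt_omega1 δ.2 (x - a)⟩

/-- A condition of the forcing `ℙ` built from a construction scheme `S` on `ω`:
a finite partial function `δ ↦ (D_δ, a_δ)` whose domain `supp` consists of countable
limit ordinals, with `D_δ ∈ S`, `a_δ ∈ D_δ`, and `D`, `a` increasing along `supp`. -/
structure Cond {τ : SchemeType} (S : ConstructionScheme τ ℕ) where
  supp : Finset Omega1
  D : Omega1 → Finset ℕ
  a : Omega1 → ℕ
  supp_limit : ∀ δ ∈ supp, Order.IsSuccLimit δ.1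
  D_mem : ∀ δ ∈ supp, ∃ k, D δ ∈ S.level k
  a_mem : ∀ δ ∈ supp, a δ ∈ D δ
  D_mono : ∀ δ₀ ∈ supp, ∀ δ₁ ∈ supp, δ₀ < δ₁ → D δ₀ ⊆ D δ₁
  a_mono : ∀ δ₀ ∈ supp, ∀ δ₁ ∈ supp, δ₀ < δ₁ → a δ₀ < a δ₁

namespace Cond

variable {τ : SchemeType} {S : ConstructionScheme τ ℕ}

/-- `p ≤ q` in `ℙ`: `supp q ⊆ supp p`, (i) `a^p_{δ'} - a^p_δ ≥ a^q_{δ'} - a^q_δ` for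
`δ < δ'` in `supp q`, and (ii) for `δ ∈ supp q` with `D^q_δ ∈ 𝓕^ω_k` there is `W ∈ 𝓕^ω_k`
with `|W ∩ a^p_δ| = |D^q_δ ∩ a^q_δ|` and `W ∖ a^p_δ` an interval of `D^p_δ`
containing `a^p_δ`. -/
def le (p q : Cond S) : Prop :=
  q.supp ⊆ p.supp ∧
  (∀ δ ∈ q.supp, ∀ δ' ∈ q.supp, δ < δ' → q.a δ' - q.a δ ≤ p.a δ' - p.a δ) ∧
  (∀ δ ∈ q.supp, ∀ k, q.D δ ∈ S.level k →
    ∃ W ∈ S.level k,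
      (W.filter (fun x => x < p.a δ)).card = ((q.D δ).filter (fun x => x < q.a δ)).card ∧
      IsIntervalOf (W.filter (fun x => p.a δ ≤ x)) (p.D δ) ∧ p.a δ ∈ W)

/-- The domain of `Φ^p`: the largest of the `D^p_δ`. -/
def dom (p : Cond S) : Finset ℕ :=
  if h : p.supp.Nonempty then p.D (p.supp.max' h) else ∅

/-- The map `Φ^p` : on `[a_δ, a_{δ'})` (consecutive elements of `supp p`) it is
`φ_{a_δ,δ}`, below all the `a_δ`'s it is the identity. -/
def Phi (p : Cond S) (x : ℕ) : Omega1 :=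
  if h : (p.supp.filter (fun δ => p.a δ ≤ x)).Nonempty then
    phiMap (p.a ((p.supp.filter (fun δ => p.a δ ≤ x)).max' h))
      ((p.supp.filter (fun δ => p.a δ ≤ x)).max' h) x
  else natToOmega1 x

/-- The family `𝐅_p = Φ^p(𝓕^ω ↾ D^p_max)`. -/
def FF (p : Cond S) : Set (Finset Omega1) :=
  {G | ∃ L : Finset ℕ, (∃ k, L ∈ S.level k) ∧ L ⊆ p.dom ∧ G = L.image p.Phi}

end Cond

section AuxLemmas

lemma isInitialSegment_refl {Ω : Type*} [LinearOrder Ω] (A : Finset Ω) :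
    IsInitialSegment A A :=
  ⟨Finset.Subset.refl A, fun x hx _ _ _ => hx⟩

lemma IsInitialSegment.trans {Ω : Type*} [LinearOrder Ω] {A B C : Finset Ω}
    (h1 : IsInitialSegment A B) (h2 : IsInitialSegment B C) : IsInitialSegment A C := by
  refine ⟨h1.1.trans h2.1, fun x hx y hy hxy => ?_⟩
  exact h1.2 x (h2.2 x hx y (h1.1 hy) hxy) y hy hxy

lemma SchemeType.m_lt_succ (τ : SchemeType) (k : ℕ) (hk : 1 ≤ k) :
    τ.m (k - 1) < τ.m k := by
  have hrec := τ.m_rec k hk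
  have hrm := τ.r_lt_m k hk
  have hn : 2 ≤ τ.n k := lt_of_le_of_lt hk (τ.k_lt_n k hk)
  have h2 : 2 * (τ.m (k-1) - τ.r k) ≤ τ.n k * (τ.m (k-1) - τ.r k) :=
    Nat.mul_le_mul_right _ hn
  omega

lemma SchemeType.m_strictMono (τ : SchemeType) : StrictMono τ.m := by
  apply strictMono_nat_of_lt_succ
  intro k
  have := τ.m_lt_succ (k+1) (by omega)
  simpa using this

lemma SchemeType.two_le_n (τ : SchemeType) {k : ℕ} (hk : 1 ≤ k) : 2 ≤ τ.n k :=
  lt_of_le_of_lt hk (τ.k_lt_n k hk)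

namespace ConstructionScheme

variable {τ : SchemeType} {Ω : Type*} [LinearOrder Ω] (S : ConstructionScheme τ Ω)

lemma root_subset_decomp_zero {k : ℕ} {F : Finset Ω} (hk : 1 ≤ k) (hF : F ∈ S.level k) :
    S.root F ⊆ S.decomp F 0 := by
  have h := S.decomp_root k hk F hF 0 (by have := τ.two_le_n hk; omega) 1
    (τ.two_le_n hk) (by omega)
  rw [← h]
  exact Finset.inter_subset_left

lemma decomp_subset {k : ℕ} {F : Finset Ω} (hk : 1 ≤ k) (hF : F ∈ S.level k)
    {s : ℕ} (hs : s < τ.n k) : S.decomp F s ⊆ F := by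
  conv_rhs => rw [S.decomp_union k hk F hF]
  exact Finset.subset_biUnion_of_mem _ (Finset.mem_range.2 hs)

lemma decomp_zero_initSeg {k : ℕ} {F : Finset Ω} (hk : 1 ≤ k) (hF : F ∈ S.level k) :
    IsInitialSegment (S.decomp F 0) F := by
  refine ⟨S.decomp_subset hk hF (by have := τ.two_le_n hk; omega), fun x hx y hy hxy => ?_⟩
  by_cases hxr : x ∈ S.root F
  · exact S.root_subset_decomp_zero hk hF hxr
  · -- x ∈ some copy s, s must be 0
    have hx' := hx
    rw [S.decomp_union k hk F hF] at hx'
    obtain ⟨s, hs, hxs⟩ := Finset.mem_biUnion.1 hx'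
    rw [Finset.mem_range] at hs
    rcases Nat.eq_zero_or_pos s with rfl | hspos
    · exact hxs
    · exfalso
      by_cases hyr : y ∈ S.root F
      · have := S.root_lt_decomp k hk F hF s hs y hyr x (Finset.mem_sdiff.2 ⟨hxs, hxr⟩)
        exact absurd hxy (not_le.2 this)
      · have := S.decomp_increasing k hk F hF 0 s hspos hs y
          (Finset.mem_sdiff.2 ⟨hy, hyr⟩) x (Finset.mem_sdiff.2 ⟨hxs, hxr⟩)
        exact absurd hxy (not_le.2 this)

lemma descent : ∀ κ' : ℕ, ∀ X ∈ S.level κ', ∀ κ ≤ κ',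
    ∃ W ∈ S.level κ, IsInitialSegment W X := by
  intro κ'
  induction κ' with
  | zero =>
    intro X hX κ hκ
    interval_cases κ
    exact ⟨X, hX, isInitialSegment_refl X⟩
  | succ κ'' ih =>
    intro X hX κ hκ
    rcases Nat.eq_or_lt_of_le hκ with rfl | hlt
    · exact ⟨X, hX, isInitialSegment_refl X⟩
    · have h1 : 1 ≤ κ'' + 1 := by omega
      have hX0 : S.decomp X 0 ∈ S.level κ'' := by
        have := S.decomp_mem (κ''+1) h1 X hX 0 (by have := τ.two_le_n h1; omega)
        simpa using this
      obtain ⟨W, hW, hWinit⟩ := ih (S.decomp X 0) hX0 κ (by omega)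
      exact ⟨W, hW, hWinit.trans (S.decomp_zero_initSeg h1 hX)⟩

end ConstructionScheme

lemma exists_nth_elem (W : Finset ℕ) : ∀ c : ℕ, c < W.card →
    ∃ α ∈ W, (W.filter (fun y => y < α)).card = c := by
  intro c
  induction c with
  | zero =>
    intro hc
    have hne : W.Nonempty := Finset.card_pos.1 (by omega)
    refine ⟨W.min' hne, W.min'_mem hne, ?_⟩
    rw [Finset.card_eq_zero, Finset.filter_eq_empty_iff]
    intro y hy
    exact not_lt.2 (W.min'_le y hy)
  | succ c ih =>
    intro hc
    obtain ⟨α', hα'W, hα'card⟩ := ih (by omega)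
    have hne : (W.filter (fun y => α' < y)).Nonempty := by
      by_contra hemp
      rw [Finset.not_nonempty_iff_eq_empty] at hemp
      have hsub : W ⊆ insert α' (W.filter (fun y => y < α')) := by
        intro y hy
        rcases lt_trichotomy y α' with h | h | h
        · exact Finset.mem_insert.2 (Or.inr (Finset.mem_filter.2 ⟨hy, h⟩))
        · exact Finset.mem_insert.2 (Or.inl h)
        · exact absurd (Finset.mem_filter.2 ⟨hy, h⟩) (by rw [hemp]; simp)
      have := Finset.card_le_card hsub
      have := Finset.card_insert_le α' (W.filter (fun y => y < α'))
      omega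
    set α := (W.filter (fun y => α' < y)).min' hne with hαdef
    have hαmem : α ∈ W.filter (fun y => α' < y) := Finset.min'_mem _ hne
    rw [Finset.mem_filter] at hαmem
    refine ⟨α, hαmem.1, ?_⟩
    have hfeq : W.filter (fun y => y < α) = insert α' (W.filter (fun y => y < α')) := by
      ext y
      simp only [Finset.mem_filter, Finset.mem_insert]
      constructor
      · rintro ⟨hyW, hyα⟩
        rcases lt_trichotomy y α' with h | h | h
        · exact Or.inr ⟨hyW, h⟩
        · exact Or.inl h
        · exfalso
          have : α ≤ y := Finset.min'_le _ y (Finset.mem_filter.2 ⟨hyW, h⟩)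
          omega
      · rintro (rfl | ⟨hyW, h⟩)
        · exact ⟨hα'W, hαmem.2⟩
        · exact ⟨hyW, lt_trans h hαmem.2⟩
    rw [hfeq, Finset.card_insert_of_notMem (by simp), hα'card]

lemma add_omega0_lt_omega1 {δ : Ordinal.{0}} (h : δ < omega1) :
    δ + Ordinal.omega0 < omega1 := by
  rw [omega1, Cardinal.lt_ord] at h ⊢
  rw [Ordinal.card_add]
  exact Cardinal.add_lt_of_lt (Cardinal.aleph0_le_aleph 1) h
    (by simpa [Ordinal.card_omega0] using Cardinal.aleph0_lt_aleph_one)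

end AuxLemmas
/-- Let `𝓕^ω` be a construction scheme on `ω` with the property that for
every finite `A ⊆ ω` and `a < ω` there is `F ∈ 𝓕^ω` with canonical decomposition
`(Fᵢ)_{i<n_k}` such that `A ⊆ F₀` and `R(F) = F₀ ∩ a`, and let `ℙ` be the associated
poset.  Then for every `p ∈ ℙ` and every `ξ < ω₁` there are `q ≤ p` and `x < ω` in the
domain of `Φ^q` with `Φ^q(x) = ξ`. -/
theorem exists_extension_hitting {τ : SchemeType} (S : ConstructionScheme τ ℕ)
    (hS : ∀ A : Finset ℕ, ∀ a : ℕ, ∃ k, 1 ≤ k ∧ ∃ F ∈ S.level k,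
      A ⊆ S.decomp F 0 ∧ S.root F = (S.decomp F 0).filter (fun x => x < a))
    (p : Cond S) (ξ : Omega1) :
    ∃ q : Cond S, q.le p ∧ ∃ x ∈ q.dom, q.Phi x = ξ := by
  classical
  -- ordinal decomposition ξ = δo + i
  obtain ⟨i, hi⟩ := Ordinal.lt_omega0.1 (Ordinal.mod_lt ξ.1 Ordinal.omega0_ne_zero)
  set δo : Ordinal.{0} := Ordinal.omega0 * (ξ.1 / Ordinal.omega0) with hδo
  have hδi : δo + (i : Ordinal) = ξ.1 := by
    rw [← hi]; exact Ordinal.div_add_mod ξ.1 _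
  have hδole : δo ≤ ξ.1 := by rw [← hδi]; exact le_self_add
  set δbar : Omega1 := ⟨δo, lt_of_le_of_lt hδole ξ.2⟩ with hδbardef
  -- numeric parameters
  set maxdom : ℕ := p.dom.sup id with hmaxdomdef
  set Mcard : ℕ := p.dom.card with hMcarddef
  set t : ℕ := p.supp.card with htdef
  set B : ℕ := maxdom + Mcard + τ.m t + i + i + 2 with hBdef
  set B₀ : ℕ := maxdom + i + 1 with hB₀def
  -- the big scheme member F
  obtain ⟨K, hK1, F, hFK, hAF, hrootF'⟩ := hS (Finset.range (B + 1)) 0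
  have hroot0 : S.root F = ∅ := by
    rw [hrootF']
    simp
  have hnK2 : 2 ≤ τ.n K := τ.two_le_n hK1
  have hXmem : ∀ s < τ.n K, S.decomp F s ∈ S.level (K - 1) := fun s hs =>
    S.decomp_mem K hK1 F hFK s hs
  have hXsub : ∀ s < τ.n K, S.decomp F s ⊆ F := fun s hs => S.decomp_subset hK1 hFK hs
  have hXcard : ∀ s < τ.n K, (S.decomp F s).card = τ.m (K - 1) := fun s hs =>
    S.card_eq _ _ (hXmem s hs)
  have hincr : ∀ s s' : ℕ, s < s' → s' < τ.n K →
      ∀ x ∈ S.decomp F s, ∀ y ∈ S.decomp F s', x < y := by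
    intro s s' hss' hs' x hx y hy
    exact S.decomp_increasing K hK1 F hFK s s' hss' hs' x
      (by rw [hroot0]; simpa using hx) y (by rw [hroot0]; simpa using hy)
  have hXint : ∀ s < τ.n K, ∀ x ∈ S.decomp F s, ∀ z ∈ S.decomp F s, ∀ y ∈ F,
      x < y → y < z → y ∈ S.decomp F s := by
    intro s hs x hx z hz y hy h1 h2
    rw [S.decomp_union K hK1 F hFK, Finset.mem_biUnion] at hy
    obtain ⟨s', hs', hys'⟩ := hy
    rw [Finset.mem_range] at hs'
    rcases lt_trichotomy s' s with h | rfl | h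
    · exact absurd (hincr s' s h hs y hys' x hx) (by omega)
    · exact hys'
    · exact absurd (hincr s s' h hs' z hz y hys') (by omega)
  have hF0card : B + 1 ≤ τ.m (K - 1) := by
    have h := Finset.card_le_card hAF
    rwa [Finset.card_range, hXcard 0 (by omega)] at h
  -- facts about p
  have hDsub : ∀ β ∈ p.supp, p.D β ⊆ p.dom := by
    intro β hβ
    have hne : p.supp.Nonempty := ⟨β, hβ⟩
    rw [Cond.dom, dif_pos hne]
    rcases eq_or_lt_of_le (Finset.le_max' _ β hβ) with h | h
    · rw [← h]
    · exact p.D_mono β hβ _ (p.supp.max'_mem hne) h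
  have hDB : ∀ β ∈ p.supp, p.D β ⊆ Finset.range (B + 1) := by
    intro β hβ y hy
    have : y ≤ maxdom := Finset.le_sup (f := id) (hDsub β hβ hy)
    rw [Finset.mem_range]; omega
  have haB : ∀ β ∈ p.supp, p.a β ≤ maxdom := fun β hβ =>
    Finset.le_sup (f := id) (hDsub β hβ (p.a_mem β hβ))
  have hcardM : ∀ β ∈ p.supp, (p.D β).card ≤ Mcard := fun β hβ =>
    Finset.card_le_card (hDsub β hβ)
  -- levels of the p.D β
  set kk : Omega1 → ℕ := fun β => if h : β ∈ p.supp then (p.D_mem β h).choose else 0 with hkkdef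
  have hkk : ∀ β ∈ p.supp, p.D β ∈ S.level (kk β) := by
    intro β hβ
    simp only [hkkdef, dif_pos hβ]
    exact (p.D_mem β hβ).choose_spec
  set cc : Omega1 → ℕ := fun β => ((p.D β).filter (fun y => y < p.a β)).card with hccdef
  have hcclt : ∀ β ∈ p.supp, cc β < (p.D β).card := by
    intro β hβ
    apply Finset.card_lt_card
    constructor
    · exact Finset.filter_subset _ _
    · intro hsub
      have h := hsub (p.a_mem β hβ)
      rw [Finset.mem_filter] at h
      omega
  have hmkk : ∀ β ∈ p.supp, τ.m (kk β) = (p.D β).card := fun β hβ =>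
    (S.card_eq _ _ (hkk β hβ)).symm
  have hkkK : ∀ β ∈ p.supp, kk β ≤ K - 1 := by
    intro β hβ
    have h1 : τ.m (kk β) < τ.m (K - 1) := by
      have := hcardM β hβ; have := hmkk β hβ; omega
    exact le_of_lt (τ.m_strictMono.lt_iff_lt.1 h1)
  have hmt : τ.m t < τ.m (K - 1) := by omega
  have htK : t + 2 ≤ K := by
    have := τ.m_strictMono.lt_iff_lt.1 hmt
    omega
  have htn : t + 1 < τ.n K := by
    have := τ.k_lt_n K hK1; omega
  -- copy indices
  set ss : Omega1 → ℕ := fun β => 1 + (p.supp.filter (fun γ => δbar < γ ∧ γ < β)).card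
    with hssdef
  have hss_le : ∀ β ∈ p.supp, ss β ≤ t := by
    intro β hβ
    have h : (p.supp.filter (fun γ => δbar < γ ∧ γ < β)).card < t := by
      apply Finset.card_lt_card
      constructor
      · exact Finset.filter_subset _ _
      · intro hsub
        have h := hsub hβ
        rw [Finset.mem_filter] at h
        exact absurd h.2.2 (lt_irrefl β)
    simp only [hssdef]; omega
  have hss_lt_n : ∀ β ∈ p.supp, ss β < τ.n K := fun β hβ => by
    have := hss_le β hβ; omega
  have hss1 : ∀ β, 1 ≤ ss β := fun β => Nat.le_add_right 1 _
  have hssmono : ∀ β ∈ p.supp, ∀ β' ∈ p.supp, δbar < β → β < β' → ss β < ss β' := by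
    intro β hβ β' hβ' hδβ hββ'
    have hsub : insert β (p.supp.filter (fun γ => δbar < γ ∧ γ < β)) ⊆
        p.supp.filter (fun γ => δbar < γ ∧ γ < β') := by
      intro γ hγ
      rcases Finset.mem_insert.1 hγ with rfl | hγ
      · exact Finset.mem_filter.2 ⟨hβ, hδβ, hββ'⟩
      · rw [Finset.mem_filter] at hγ ⊢
        exact ⟨hγ.1, hγ.2.1, lt_trans hγ.2.2 hββ'⟩
    have h1 := Finset.card_le_card hsub
    rw [Finset.card_insert_of_notMem (by simp)] at h1
    simp only [hssdef]; omega
  -- the members W and points α for the moved coordinates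
  have hWex : ∀ β : Omega1, ∃ W : Finset ℕ, β ∈ p.supp →
      W ∈ S.level (kk β) ∧ IsInitialSegment W (S.decomp F (ss β)) := by
    intro β
    by_cases hβ : β ∈ p.supp
    · obtain ⟨W, hW1, hW2⟩ := S.descent (K - 1) (S.decomp F (ss β))
        (hXmem _ (hss_lt_n β hβ)) (kk β) (hkkK β hβ)
      exact ⟨W, fun _ => ⟨hW1, hW2⟩⟩
    · exact ⟨∅, fun h => absurd h hβ⟩
  choose WW hWW using hWex
  have hWWcard : ∀ β ∈ p.supp, cc β < (WW β).card := by
    intro β hβ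
    rw [S.card_eq _ _ ((hWW β hβ).1)]
    have := hmkk β hβ; have := hcclt β hβ; omega
  have hαex : ∀ β : Omega1, ∃ α : ℕ, β ∈ p.supp →
      α ∈ WW β ∧ ((WW β).filter (fun y => y < α)).card = cc β := by
    intro β
    by_cases hβ : β ∈ p.supp
    · obtain ⟨α, h1, h2⟩ := exists_nth_elem (WW β) (cc β) (hWWcard β hβ)
      exact ⟨α, fun _ => ⟨h1, h2⟩⟩
    · exact ⟨0, fun h => absurd h hβ⟩
  choose αα hαα using hαex
  have hαX : ∀ β ∈ p.supp, αα β ∈ S.decomp F (ss β) := fun β hβ =>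
    (hWW β hβ).2.1 ((hαα β hβ).1)
  have hBF0 : B ∈ S.decomp F 0 := hAF (Finset.mem_range.2 (by omega))
  have hBF : B ∈ F := hXsub 0 (by omega) hBF0
  have hαB : ∀ β ∈ p.supp, B < αα β := fun β hβ =>
    hincr 0 (ss β) (hss1 β) (hss_lt_n β hβ) B hBF0 _ (hαX β hβ)
  have hααF : ∀ β ∈ p.supp, αα β ∈ F := fun β hβ => hXsub _ (hss_lt_n β hβ) (hαX β hβ)
  have hαmono : ∀ β ∈ p.supp, ∀ β' ∈ p.supp, δbar < β → β < β' → αα β < αα β' := by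
    intro β hβ β' hβ' h1 h2
    exact hincr (ss β) (ss β') (hssmono β hβ β' hβ' h1 h2) (hss_lt_n β' hβ') _
      (hαX β hβ) _ (hαX β' hβ')
  have hXfiltercard : ∀ β ∈ p.supp,
      ((S.decomp F (ss β)).filter (fun y => αα β < y)).card = τ.m (K - 1) - cc β - 1 := by
    intro β hβ
    have hWX : WW β ⊆ S.decomp F (ss β) := (hWW β hβ).2.1
    have hlt_eq : (S.decomp F (ss β)).filter (fun y => y < αα β) =
        (WW β).filter (fun y => y < αα β) := by
      ext y
      simp only [Finset.mem_filter]
      constructor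
      · rintro ⟨hyX, hyα⟩
        exact ⟨(hWW β hβ).2.2 y hyX (αα β) ((hαα β hβ).1) (le_of_lt hyα), hyα⟩
      · rintro ⟨hyW, hyα⟩
        exact ⟨hWX hyW, hyα⟩
    have h1 := Finset.card_filter_add_card_filter_not
      (s := S.decomp F (ss β)) (p := fun y => y < αα β)
    have h2 : (S.decomp F (ss β)).filter (fun y => ¬ y < αα β) =
        insert (αα β) ((S.decomp F (ss β)).filter (fun y => αα β < y)) := by
      ext y
      simp only [Finset.mem_filter, Finset.mem_insert, not_lt]
      constructor
      · rintro ⟨hyX, hy⟩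
        rcases eq_or_lt_of_le hy with h | h
        · exact Or.inl h.symm
        · exact Or.inr ⟨hyX, h⟩
      · rintro (rfl | ⟨hyX, h⟩)
        · exact ⟨hαX β hβ, le_refl _⟩
        · exact ⟨hyX, le_of_lt h⟩
    have hXc := hXcard (ss β) (hss_lt_n β hβ)
    have hccX : ((S.decomp F (ss β)).filter (fun y => y < αα β)).card = cc β := by
      rw [hlt_eq, (hαα β hβ).2]
    have hnotmem : αα β ∉ (S.decomp F (ss β)).filter (fun y => αα β < y) := by simp
    rw [h2, Finset.card_insert_of_notMem hnotmem] at h1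
    omega
  have hccM : ∀ β ∈ p.supp, cc β ≤ Mcard := by
    intro β hβ
    have := hcclt β hβ; have := hcardM β hβ; omega
  have hαgap : ∀ β ∈ p.supp, ∀ β' ∈ p.supp, δbar < β → β < β' →
      αα β + (maxdom + 2) ≤ αα β' := by
    intro β hβ β' hβ' h1 h2
    have hsub : (S.decomp F (ss β)).filter (fun y => αα β < y) ⊆
        Finset.Ioo (αα β) (αα β') := by
      intro y hy
      rw [Finset.mem_filter] at hy
      rw [Finset.mem_Ioo]
      exact ⟨hy.2, hincr (ss β) (ss β') (hssmono β hβ β' hβ' h1 h2) (hss_lt_n β' hβ')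
        y hy.1 _ (hαX β' hβ')⟩
    have hcard := Finset.card_le_card hsub
    rw [Nat.card_Ioo, hXfiltercard β hβ] at hcard
    have h3 := hccM β hβ
    have h4 := hαB β hβ
    have h5 := hαB β' hβ'
    omega
  -- the top point δtop
  set σo : Ordinal.{0} := (p.supp.sup fun β => β.1) ⊔ ξ.1 with hσodef
  have homega1pos : (0 : Ordinal) < omega1 := by simpa using nat_lt_omega1 0
  have hσlt : σo < omega1 := by
    rw [hσodef, sup_lt_iff]
    exact ⟨(Finset.sup_lt_iff homega1pos).2 (fun b _ => b.2), ξ.2⟩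
  set δtop : Omega1 := ⟨σo + Ordinal.omega0, add_omega0_lt_omega1 hσlt⟩ with hδtopdef
  have hsuppσ : ∀ β ∈ p.supp, β.1 ≤ σo := fun β hβ =>
    le_trans (Finset.le_sup hβ) le_sup_left
  have hξσ : ξ.1 ≤ σo := le_sup_right
  have hσδtop : σo < δtop.1 := by
    rw [hδtopdef]
    have h : σo + 0 < σo + Ordinal.omega0 := (add_lt_add_iff_left σo).2 Ordinal.omega0_pos
    simpa using h
  have hδtopgt : ∀ β ∈ p.supp, β < δtop := fun β hβ =>
    Subtype.coe_lt_coe.1 (lt_of_le_of_lt (hsuppσ β hβ) hσδtop)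
  have hδbarltδtop : δbar < δtop :=
    Subtype.coe_lt_coe.1 (lt_of_le_of_lt (le_trans hδole hξσ) hσδtop)
  have hδtopnotin : δtop ∉ p.supp := fun h => lt_irrefl _ (hδtopgt _ h)
  have hδbarlim : Ordinal.omega0 ≤ ξ.1 → Order.IsSuccLimit δo := by
    intro hmc
    have hq : ξ.1 / Ordinal.omega0 ≠ 0 := by
      intro h0
      have hz : δo = 0 := by rw [hδo, h0, mul_zero]
      rw [hz, zero_add] at hδi
      exact absurd (hδi ▸ Ordinal.nat_lt_omega0 i) (not_lt.2 hmc)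
    rw [Ordinal.isSuccLimit_iff_omega0_dvd]
    exact ⟨mul_ne_zero Ordinal.omega0_ne_zero hq, dvd_mul_right _ _⟩
  -- definition of q
  set qsupp : Finset Omega1 :=
    if Ordinal.omega0 ≤ ξ.1 then insert δbar (insert δtop p.supp)
    else insert δtop p.supp with hqsuppdef
  set qD : Omega1 → Finset ℕ := fun γ => if γ ∈ p.supp ∧ γ ≤ δbar then p.D γ else F
    with hqDdef
  have hFne : F.Nonempty := ⟨B, hBF⟩
  set maxF : ℕ := F.max' hFne with hmaxFdef
  set qa : Omega1 → ℕ := fun γ =>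
    if γ ∈ p.supp ∧ γ ≤ δbar then p.a γ
    else if γ = δbar then B₀
    else if γ = δtop then maxF
    else αα γ with hqadef
  have hmemq : ∀ γ, γ ∈ qsupp ↔
      ((Ordinal.omega0 ≤ ξ.1 ∧ γ = δbar) ∨ γ = δtop ∨ γ ∈ p.supp) := by
    intro γ
    rw [hqsuppdef]
    by_cases hmc : Ordinal.omega0 ≤ ξ.1 <;> simp [hmc]
  -- value lemmas
  have hqa_unmoved : ∀ γ, γ ∈ p.supp → γ ≤ δbar → qa γ = p.a γ := by
    intro γ h1 h2; simp only [hqadef]; rw [if_pos ⟨h1, h2⟩]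
  have hqD_unmoved : ∀ γ, γ ∈ p.supp → γ ≤ δbar → qD γ = p.D γ := by
    intro γ h1 h2; simp only [hqDdef]; rw [if_pos ⟨h1, h2⟩]
  have hqD_moved : ∀ γ, ¬(γ ∈ p.supp ∧ γ ≤ δbar) → qD γ = F := by
    intro γ h; simp only [hqDdef]; rw [if_neg h]
  have hqa_moved : ∀ γ, γ ∈ p.supp → δbar < γ → qa γ = αα γ := by
    intro γ h1 h2
    have hne1 : ¬(γ ∈ p.supp ∧ γ ≤ δbar) := by rintro ⟨_, h⟩; exact absurd h2 (not_lt.2 h)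
    have hne2 : γ ≠ δbar := by rintro rfl; exact lt_irrefl _ h2
    have hne3 : γ ≠ δtop := by rintro rfl; exact hδtopnotin h1
    simp only [hqadef]; rw [if_neg hne1, if_neg hne2, if_neg hne3]
  have hqa_δtop : qa δtop = maxF := by
    have hne1 : ¬(δtop ∈ p.supp ∧ δtop ≤ δbar) := by rintro ⟨h, _⟩; exact hδtopnotin h
    have hne2 : δtop ≠ δbar := ne_of_gt hδbarltδtop
    simp only [hqadef]; rw [if_neg hne1, if_neg hne2]; simp
  have hqa_δbar_new : δbar ∉ p.supp → qa δbar = B₀ := by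
    intro h
    have hne1 : ¬(δbar ∈ p.supp ∧ δbar ≤ δbar) := by rintro ⟨h1, _⟩; exact h h1
    simp only [hqadef]; rw [if_neg hne1]; simp
  have hqa_δbar_le : qa δbar ≤ maxdom + i + 1 := by
    by_cases h : δbar ∈ p.supp
    · rw [hqa_unmoved δbar h le_rfl]
      have := haB δbar h; omega
    · rw [hqa_δbar_new h]
  -- maxF bounds
  have hX1ne : (S.decomp F 1).Nonempty := by
    apply Finset.card_pos.1
    rw [hXcard 1 (by omega)]
    omega
  obtain ⟨y1, hy1⟩ := hX1ne
  have hmaxFB : B < maxF :=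
    lt_of_lt_of_le (hincr 0 1 one_pos (by omega) B hBF0 y1 hy1)
      (F.le_max' y1 (hXsub 1 (by omega) hy1))
  have hmaxFα : ∀ β ∈ p.supp, αα β < maxF := by
    intro β hβ
    have hssn : ss β + 1 < τ.n K := by have := hss_le β hβ; omega
    have hXne : (S.decomp F (ss β + 1)).Nonempty := by
      apply Finset.card_pos.1
      rw [hXcard _ hssn]
      omega
    obtain ⟨y, hy⟩ := hXne
    exact lt_of_lt_of_le (hincr (ss β) (ss β + 1) (lt_add_one _) hssn _ (hαX β hβ) y hy)
      (F.le_max' y (hXsub _ hssn hy))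
  -- Cond fields
  have hsupp_limit : ∀ γ ∈ qsupp, Order.IsSuccLimit γ.1 := by
    intro γ hγ
    rcases (hmemq γ).1 hγ with ⟨hmc, rfl⟩ | rfl | hγp
    · exact hδbarlim hmc
    · exact Ordinal.isSuccLimit_add σo Ordinal.isSuccLimit_omega0
    · exact p.supp_limit γ hγp
  have hD_mem : ∀ γ ∈ qsupp, ∃ k, qD γ ∈ S.level k := by
    intro γ hγ
    by_cases h : γ ∈ p.supp ∧ γ ≤ δbar
    · rw [hqD_unmoved γ h.1 h.2]; exact p.D_mem γ h.1
    · rw [hqD_moved γ h]; exact ⟨K, hFK⟩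
  have ha_mem : ∀ γ ∈ qsupp, qa γ ∈ qD γ := by
    intro γ hγ
    by_cases h : γ ∈ p.supp ∧ γ ≤ δbar
    · rw [hqD_unmoved γ h.1 h.2, hqa_unmoved γ h.1 h.2]; exact p.a_mem γ h.1
    · rw [hqD_moved γ h]
      rcases (hmemq γ).1 hγ with ⟨hmc, rfl⟩ | rfl | hγp
      · have hns : δbar ∉ p.supp := fun hin => h ⟨hin, le_rfl⟩
        rw [hqa_δbar_new hns]
        exact hXsub 0 (by omega) (hAF (Finset.mem_range.2 (by omega)))
      · rw [hqa_δtop]; exact F.max'_mem hFne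
      · have hmov : δbar < γ := not_le.1 (fun hle => h ⟨hγp, hle⟩)
        rw [hqa_moved γ hγp hmov]; exact hααF γ hγp
  have hD_mono : ∀ γ₀ ∈ qsupp, ∀ γ₁ ∈ qsupp, γ₀ < γ₁ → qD γ₀ ⊆ qD γ₁ := by
    intro γ₀ h₀ γ₁ h₁ hlt
    by_cases hu1 : γ₁ ∈ p.supp ∧ γ₁ ≤ δbar
    · have hu0 : γ₀ ∈ p.supp ∧ γ₀ ≤ δbar := by
        rcases (hmemq γ₀).1 h₀ with ⟨_, rfl⟩ | rfl | hγp
        · exact absurd (lt_of_lt_of_le hlt hu1.2) (lt_irrefl _)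
        · exact absurd (lt_trans hlt (lt_of_le_of_lt hu1.2 hδbarltδtop)) (lt_irrefl _)
        · exact ⟨hγp, le_trans (le_of_lt hlt) hu1.2⟩
      rw [hqD_unmoved _ hu0.1 hu0.2, hqD_unmoved _ hu1.1 hu1.2]
      exact p.D_mono γ₀ hu0.1 γ₁ hu1.1 hlt
    · rw [hqD_moved _ hu1]
      by_cases hu0 : γ₀ ∈ p.supp ∧ γ₀ ≤ δbar
      · rw [hqD_unmoved _ hu0.1 hu0.2]
        exact subset_trans (hDB γ₀ hu0.1) (subset_trans hAF (hXsub 0 (by omega)))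
      · rw [hqD_moved _ hu0]
  have hlt_maxF : ∀ γ ∈ qsupp, γ ≠ δtop → qa γ < maxF := by
    intro γ hγ hne
    by_cases hu : γ ∈ p.supp ∧ γ ≤ δbar
    · rw [hqa_unmoved _ hu.1 hu.2]
      have := haB _ hu.1; omega
    · rcases (hmemq γ).1 hγ with ⟨hmc, rfl⟩ | rfl | hγp
      · have hns : δbar ∉ p.supp := fun hin => hu ⟨hin, le_rfl⟩
        rw [hqa_δbar_new hns]; omega
      · exact absurd rfl hne
      · have hmov : δbar < γ := not_le.1 fun hle => hu ⟨hγp, hle⟩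
        rw [hqa_moved _ hγp hmov]; exact hmaxFα _ hγp
  have ha_mono : ∀ γ₀ ∈ qsupp, ∀ γ₁ ∈ qsupp, γ₀ < γ₁ → qa γ₀ < qa γ₁ := by
    intro γ₀ h₀ γ₁ h₁ hlt
    rcases (hmemq γ₁).1 h₁ with ⟨hmc, rfl⟩ | rfl | hγ₁p
    · rcases (hmemq γ₀).1 h₀ with ⟨_, rfl⟩ | rfl | hγ₀p
      · exact absurd hlt (lt_irrefl _)
      · exact absurd (lt_trans hlt hδbarltδtop) (lt_irrefl _)
      · rw [hqa_unmoved _ hγ₀p (le_of_lt hlt)]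
        by_cases hδin : δbar ∈ p.supp
        · rw [hqa_unmoved _ hδin le_rfl]
          exact p.a_mono _ hγ₀p _ hδin hlt
        · rw [hqa_δbar_new hδin]
          have := haB _ hγ₀p; omega
    · rw [hqa_δtop]
      exact hlt_maxF γ₀ h₀ (ne_of_lt hlt)
    · by_cases hu1 : γ₁ ≤ δbar
      · rcases (hmemq γ₀).1 h₀ with ⟨_, rfl⟩ | rfl | hγ₀p
        · exact absurd (lt_of_lt_of_le hlt hu1) (lt_irrefl _)
        · exact absurd (lt_trans hlt (lt_of_le_of_lt hu1 hδbarltδtop)) (lt_irrefl _)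
        · rw [hqa_unmoved _ hγ₀p (le_trans (le_of_lt hlt) hu1), hqa_unmoved _ hγ₁p hu1]
          exact p.a_mono _ hγ₀p _ hγ₁p hlt
      · have hmov1 : δbar < γ₁ := not_le.1 hu1
        rw [hqa_moved _ hγ₁p hmov1]
        rcases (hmemq γ₀).1 h₀ with ⟨_, rfl⟩ | rfl | hγ₀p
        · have h1 := hqa_δbar_le
          have h2 := hαB γ₁ hγ₁p
          omega
        · exact absurd (lt_trans (hδtopgt _ hγ₁p) hlt) (lt_irrefl _)
        · by_cases hu0 : γ₀ ≤ δbar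
          · rw [hqa_unmoved _ hγ₀p hu0]
            have := haB _ hγ₀p
            have := hαB γ₁ hγ₁p
            omega
          · rw [hqa_moved _ hγ₀p (not_le.1 hu0)]
            exact hαmono γ₀ hγ₀p γ₁ hγ₁p (not_le.1 hu0) hlt
  -- the condition q
  refine ⟨⟨qsupp, qD, qa, hsupp_limit, hD_mem, ha_mem, hD_mono, ha_mono⟩, ⟨?_, ?_, ?_⟩, ?_⟩
  · -- supp inclusion
    intro γ hγ
    exact (hmemq γ).2 (Or.inr (Or.inr hγ))
  · -- gap condition (i)
    intro γ hγ γ' hγ' hlt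
    show p.a γ' - p.a γ ≤ qa γ' - qa γ
    by_cases hu1 : γ' ≤ δbar
    · rw [hqa_unmoved _ hγ' hu1, hqa_unmoved _ hγ (le_trans (le_of_lt hlt) hu1)]
    · have hmov1 : δbar < γ' := not_le.1 hu1
      rw [hqa_moved _ hγ' hmov1]
      by_cases hu0 : γ ≤ δbar
      · rw [hqa_unmoved _ hγ hu0]
        have h1 := hαB γ' hγ'
        have h2 := haB γ' hγ'
        have h3 := haB γ hγ
        omega
      · have hmov0 : δbar < γ := not_le.1 hu0
        rw [hqa_moved _ hγ hmov0]
        have h1 := hαgap γ hγ γ' hγ' hmov0 hlt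
        have h2 := haB γ' hγ'
        have h3 := haB γ hγ
        omega
  · -- condition (ii)
    intro γ hγ k hklevel
    show ∃ W ∈ S.level k,
      (W.filter (fun x => x < qa γ)).card = ((p.D γ).filter (fun x => x < p.a γ)).card ∧
      IsIntervalOf (W.filter (fun x => qa γ ≤ x)) (qD γ) ∧ qa γ ∈ W
    by_cases hu : γ ≤ δbar
    · rw [hqa_unmoved _ hγ hu, hqD_unmoved _ hγ hu]
      refine ⟨p.D γ, hklevel, rfl, ⟨Finset.filter_subset _ _, ?_⟩, p.a_mem γ hγ⟩
      intro x hx z hz y hy h1 h2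
      rw [Finset.mem_filter] at hx ⊢
      exact ⟨hy, le_trans hx.2 (le_of_lt h1)⟩
    · have hmov : δbar < γ := not_le.1 hu
      have hkeq : k = kk γ := S.level_eq k (kk γ) (p.D γ) hklevel (hkk γ hγ)
      rw [hqa_moved _ hγ hmov, hqD_moved _ (fun h => hu h.2)]
      refine ⟨WW γ, by rw [hkeq]; exact (hWW γ hγ).1, ?_, ⟨?_, ?_⟩, (hαα γ hγ).1⟩
      · rw [(hαα γ hγ).2]
      · intro y hy
        exact hXsub _ (hss_lt_n γ hγ) ((hWW γ hγ).2.1 (Finset.mem_filter.1 hy).1)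
      · intro x hx z hz y hy h1 h2
        rw [Finset.mem_filter] at hx hz ⊢
        have hyX : y ∈ S.decomp F (ss γ) := hXint _ (hss_lt_n γ hγ) x
          ((hWW γ hγ).2.1 hx.1) z ((hWW γ hγ).2.1 hz.1) y hy h1 h2
        have hyW : y ∈ WW γ := (hWW γ hγ).2.2 y hyX z hz.1 (le_of_lt h2)
        exact ⟨hyW, le_trans hx.2 (le_of_lt h1)⟩
  · -- the point x hitting ξ
    have hqne : qsupp.Nonempty := ⟨δtop, (hmemq δtop).2 (Or.inr (Or.inl rfl))⟩
    have hmax : ∀ hne : qsupp.Nonempty, qsupp.max' hne = δtop := by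
      intro hne
      apply le_antisymm
      · apply Finset.max'_le
        intro γ hγ
        rcases (hmemq γ).1 hγ with ⟨_, rfl⟩ | rfl | hγp
        · exact le_of_lt hδbarltδtop
        · exact le_rfl
        · exact le_of_lt (hδtopgt γ hγp)
      · exact Finset.le_max' _ _ ((hmemq δtop).2 (Or.inr (Or.inl rfl)))
    have hdom : (⟨qsupp, qD, qa, hsupp_limit, hD_mem, ha_mem, hD_mono, ha_mono⟩ :
        Cond S).dom = F := by
      rw [Cond.dom, dif_pos hqne, hmax hqne]
      exact hqD_moved _ (fun h => hδtopnotin h.1)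
    by_cases hmc : Ordinal.omega0 ≤ ξ.1
    · -- main case : ξ = δbar + i
      refine ⟨qa δbar + i, ?_, ?_⟩
      · rw [hdom]
        have h1 := hqa_δbar_le
        exact hXsub 0 (by omega) (hAF (Finset.mem_range.2 (by omega)))
      · have hδbarmem : δbar ∈ qsupp := (hmemq δbar).2 (Or.inl ⟨hmc, rfl⟩)
        have hfilne : (qsupp.filter (fun γ => qa γ ≤ qa δbar + i)).Nonempty :=
          ⟨δbar, Finset.mem_filter.2 ⟨hδbarmem, by omega⟩⟩
        have hfilmax : ∀ hne, (qsupp.filter (fun γ => qa γ ≤ qa δbar + i)).max' hne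
            = δbar := by
          intro hne
          apply le_antisymm
          · apply Finset.max'_le
            intro γ hγ
            rw [Finset.mem_filter] at hγ
            rcases (hmemq γ).1 hγ.1 with ⟨_, rfl⟩ | rfl | hγp
            · exact le_rfl
            · exfalso
              rw [hqa_δtop] at hγ
              have h1 := hqa_δbar_le
              omega
            · by_cases hle : γ ≤ δbar
              · exact hle
              · exfalso
                have hmov : δbar < γ := not_le.1 hle
                rw [hqa_moved _ hγp hmov] at hγ
                have h1 := hαB γ hγp
                have h2 := hqa_δbar_le
                omega
          · exact Finset.le_max' _ _ (Finset.mem_filter.2 ⟨hδbarmem, by omega⟩)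
        rw [Cond.Phi]
        dsimp only
        rw [dif_pos hfilne, hfilmax hfilne]
        rw [phiMap, if_neg (by omega)]
        apply Subtype.ext
        show δbar.1 + ((qa δbar + i - qa δbar : ℕ) : Ordinal) = ξ.1
        have hsub : qa δbar + i - qa δbar = i := by omega
        rw [hsub]
        exact hδi
    · -- case ξ < ω
      refine ⟨i, ?_, ?_⟩
      · rw [hdom]
        exact hXsub 0 (by omega) (hAF (Finset.mem_range.2 (by omega)))
      · have hempty : ¬ (qsupp.filter (fun γ => qa γ ≤ i)).Nonempty := by
          rintro ⟨γ, hγ⟩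
          rw [Finset.mem_filter] at hγ
          rcases (hmemq γ).1 hγ.1 with ⟨hmc', _⟩ | rfl | hγp
          · exact hmc hmc'
          · rw [hqa_δtop] at hγ
            omega
          · have hδz : δo = 0 := by
              rw [hδo, Ordinal.div_eq_zero_of_lt (not_le.1 hmc), mul_zero]
            have hmov : δbar < γ := by
              apply Subtype.coe_lt_coe.1
              show δbar.1 < γ.1
              rw [hδbardef]
              show δo < γ.1
              rw [hδz]
              exact (p.supp_limit γ hγp).pos
            rw [hqa_moved _ hγp hmov] at hγ
            have := hαB γ hγp
            omega
        rw [Cond.Phi]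
        dsimp only
        rw [dif_neg hempty]
        apply Subtype.ext
        show (i : Ordinal) = ξ.1
        have hδz : δo = 0 := by
          rw [hδo, Ordinal.div_eq_zero_of_lt (not_le.1 hmc), mul_zero]
        rw [← hδi, hδz, zero_add]
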